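/- arXiv:1104.0920 — 3 statements merged into one kernel-verified Lean document; each statement's English description precedes it below -/
import Mathlib

section
/- Let G be a connected simple graph with at least two vertices and let v ∈ V(G). For integers k ≥ m ≥ 1, let G_{k,m} denote the graph obtained from G by attaching at v two new disjoint paths, one with k new vertices and one with m new vertices, each joined by an edge from v to one endpoint of the path. Then H(G_{k,m}) > H(G_{k+1,m-1}). -/
open Finset SimpleGraph

open Classical in
/-- The Harary index: half the sum, over ordered pairs of distinct vertices, of the
reciprocal of the shortest-path distance (so each unordered pair is counted once). -/
noncomputable def harary {V : Type*} [Fintype V] (G : SimpleGraph V) : ℝ :=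
  (∑ u : V, ∑ v : V, if u = v then 0 else (1 : ℝ) / (G.dist u v)) / 2

/-- The path graph `P_n` on `n` vertices. -/
def pathG (n : ℕ) : SimpleGraph (Fin n) :=
  SimpleGraph.fromRel (fun x y => (y : ℕ) = (x : ℕ) + 1)

/-- The star graph `S_n` on `n` vertices, with center `0`. -/
def starG (n : ℕ) : SimpleGraph (Fin n) :=
  SimpleGraph.fromRel (fun x y => (x : ℕ) = 0 ∧ (y : ℕ) ≠ 0)

/-- The spider (starlike tree) `S(L 0, …, L (k-1))`: a center `none` together with `k`
disjoint paths, the `i`-th having `L i` vertices, the center joined to vertex `0` of each leg. -/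
def spider {k : ℕ} (L : Fin k → ℕ) : SimpleGraph (Option (Σ i : Fin k, Fin (L i))) :=
  SimpleGraph.fromRel (fun x y =>
    (∃ (i : Fin k) (j : Fin (L i)), x = none ∧ y = some ⟨i, j⟩ ∧ (j : ℕ) = 0) ∨
    (∃ (i : Fin k) (j j' : Fin (L i)),
      x = some ⟨i, j⟩ ∧ y = some ⟨i, j'⟩ ∧ (j' : ℕ) = (j : ℕ) + 1))

/-- Leg lengths of the balanced starlike tree `BS n k`: the legs sum to `n - 1` and
pairwise differ by at most `1`. -/
def balancedLegs (n k : ℕ) : Fin k → ℕ :=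
  fun i => (n - 1) / k + if (i : ℕ) < (n - 1) % k then 1 else 0

/-- The balanced starlike tree `BS_{n,k}` on `n` vertices with `k` legs of almost equal length. -/
def BS (n k : ℕ) : SimpleGraph (Option (Σ i : Fin k, Fin (balancedLegs n k i))) :=
  spider (balancedLegs n k)

/-- Leg lengths of the broom `B_{n,k}`: one leg with `n - k` vertices, `k - 1` legs with one. -/
def broomLegs (n k : ℕ) : Fin k → ℕ := fun i => if (i : ℕ) = 0 then n - k else 1

/-- The broom `B_{n,k} = S(n-k, 1, …, 1)`. -/
def broom (n k : ℕ) : SimpleGraph (Option (Σ i : Fin k, Fin (broomLegs n k i))) :=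
  spider (broomLegs n k)

/-- Leg lengths of the spur `A_{n,m}`: `n - m - 1` legs with two vertices, the rest with one. -/
def spurLegs (n m : ℕ) : Fin m → ℕ := fun i => if (i : ℕ) < n - m - 1 then 2 else 1

/-- The spur `A_{n,m}`: the star `S_{m+1}` with a pendent edge attached to `n - m - 1`
of its pendent vertices. -/
def spur (n m : ℕ) : SimpleGraph (Option (Σ i : Fin m, Fin (spurLegs n m i))) :=
  spider (spurLegs n m)

/-- The caterpillar `C_{n,d,i}`: a path `v_0 v_1 … v_d` with `n - d - 1` pendent
vertices attached at `v_i`. -/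
def caterpillar (n d i : ℕ) : SimpleGraph (Fin (d + 1) ⊕ Fin (n - d - 1)) :=
  SimpleGraph.fromRel (fun x y =>
    (∃ a b : Fin (d + 1), x = Sum.inl a ∧ y = Sum.inl b ∧ (b : ℕ) = (a : ℕ) + 1) ∨
    (∃ (a : Fin (d + 1)) (p : Fin (n - d - 1)), (a : ℕ) = i ∧ x = Sum.inl a ∧ y = Sum.inr p))

/-- Degree of a vertex. -/
noncomputable def deg {V : Type*} [Fintype V] (G : SimpleGraph V) (v : V) : ℕ :=
  (G.neighborSet v).ncard

/-- Eccentricity of a vertex: the maximum distance to another vertex. -/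
noncomputable def ecc {V : Type*} [Fintype V] (G : SimpleGraph V) (v : V) : ℕ :=
  Finset.univ.sup fun u => G.dist v u

/-- Diameter of a graph: the maximum eccentricity. -/
noncomputable def graphDiam {V : Type*} [Fintype V] (G : SimpleGraph V) : ℕ :=
  Finset.univ.sup fun v => ecc G v

/-- Radius of a graph: the minimum eccentricity. -/
noncomputable def graphRadius {V : Type*} [Fintype V] (G : SimpleGraph V) : ℕ :=
  sInf (Set.range fun v => ecc G v)

/-- Matching number: the maximum cardinality of a set of pairwise non-incident edges. -/
noncomputable def matchingNumber {V : Type*} [Fintype V] (G : SimpleGraph V) : ℕ :=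
  sSup {k | ∃ M : Finset (Sym2 V), M.card = k ∧ (∀ e ∈ M, e ∈ G.edgeSet) ∧
    ∀ e ∈ M, ∀ f ∈ M, e ≠ f → ∀ v : V, ¬(v ∈ e ∧ v ∈ f)}

/-- Independence number: the maximum cardinality of a set of pairwise non-adjacent vertices. -/
noncomputable def indepNum {V : Type*} [Fintype V] (G : SimpleGraph V) : ℕ :=
  sSup {k | ∃ s : Finset V, s.card = k ∧ ∀ u ∈ s, ∀ v ∈ s, u ≠ v → ¬ G.Adj u v}


/-- `attachTwoPaths G v k m` is the graph `G_{k,m}`: `G` together with two new disjoint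
paths, one with `k` vertices and one with `m` vertices, each joined by an edge from `v`
to one endpoint. -/
def attachTwoPaths {V : Type*} (G : SimpleGraph V) (v : V) (k m : ℕ) :
    SimpleGraph (V ⊕ (Fin k ⊕ Fin m)) :=
  SimpleGraph.fromRel (fun x y =>
    (∃ a b : V, G.Adj a b ∧ x = Sum.inl a ∧ y = Sum.inl b) ∨
    (∃ a : Fin k, (a : ℕ) = 0 ∧ x = Sum.inl v ∧ y = Sum.inr (Sum.inl a)) ∨
    (∃ a : Fin m, (a : ℕ) = 0 ∧ x = Sum.inl v ∧ y = Sum.inr (Sum.inr a)) ∨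
    (∃ a b : Fin k, x = Sum.inr (Sum.inl a) ∧ y = Sum.inr (Sum.inl b) ∧
      (b : ℕ) = (a : ℕ) + 1) ∨
    (∃ a b : Fin m, x = Sum.inr (Sum.inr a) ∧ y = Sum.inr (Sum.inr b) ∧
      (b : ℕ) = (a : ℕ) + 1))

/-!
Place `G` at height `0` of `G □ ℤ` and the two legs of `G_{k,m}` on the vertical line through
`v`, at heights `1, …, k` and `-1, …, -m`. This embedding is isometric, so
`H(G_{k,m}) = H(G) + H(P_{k+m+1}) + ∑_{a ≠ v} ∑_{t ∈ [-m, k], t ≠ 0} 1 / (d(a, v) + |t|)`.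
The path term only depends on `k + m`, and passing from `G_{k,m}` to `G_{k+1,m-1}` replaces,
for each of the (at least one) vertices `a ≠ v`, the term `1 / (d(a, v) + m)` by the smaller
`1 / (d(a, v) + k + 1)`.
-/

/-- Twice the Harary index of `T ⊆ ℤ` with the metric `|s - t|`; for an interval, twice the
Harary index of a path. -/
noncomputable def lineHararySum (T : Finset ℤ) : ℝ :=
  ∑ s ∈ T, ∑ t ∈ T, ((s - t).natAbs : ℝ)⁻¹

lemma lineHararySum_Icc_add (a b c : ℤ) :
    lineHararySum (Icc (a + c) (b + c)) = lineHararySum (Icc a b) := by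
  simp [← map_add_right_Icc, lineHararySum]

lemma lineHararySum_insert {T : Finset ℤ} {t₀ : ℤ} (h : t₀ ∉ T) :
    lineHararySum (insert t₀ T) = lineHararySum T + 2 * ∑ t ∈ T, ((t - t₀).natAbs : ℝ)⁻¹ := by
  have hsymm (t : ℤ) : (t₀ - t).natAbs = (t - t₀).natAbs := by omega
  simp only [lineHararySum, sum_insert h, sub_self, Int.natAbs_zero, Nat.cast_zero, inv_zero,
    zero_add, sum_add_distrib, hsymm]
  ring

/- The diagonal needs no special treatment: `G.dist u u = 0` and `(0 : ℝ)⁻¹ = 0`. -/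
lemma harary_eq_sum_inv {V : Type*} [Fintype V] (G : SimpleGraph V) :
    harary G = (∑ u, ∑ w, (G.dist u w : ℝ)⁻¹) / 2 := by
  unfold harary
  congr 1
  refine sum_congr rfl fun u _ ↦ sum_congr rfl fun w _ ↦ ?_
  split_ifs with h
  · simp [h]
  · rw [one_div]

lemma SimpleGraph.exists_walk_length_eq_of_adj_add_one {W : Type*} {H : SimpleGraph W}
    {f : ℤ → W} {a b : ℤ} (hf : ∀ t, a ≤ t → t < b → H.Adj (f t) (f (t + 1)))
    {s t : ℤ} (hs : a ≤ s) (hst : s ≤ t) (ht : t ≤ b) :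
    ∃ p : H.Walk (f s) (f t), p.length = (t - s).toNat := by
  induction t, hst using Int.leInduction with
  | base => exact ⟨.nil, by simp⟩
  | succ t hst ih =>
    obtain ⟨p, hp⟩ := ih (by omega)
    exact ⟨p.concat (hf t (by omega) (by omega)), by simp [hp]; omega⟩

namespace AttachTwoPaths

variable {V : Type*} {k m : ℕ}

/- A vertex `x` of `attachTwoPaths G v k m` is encoded as `(base v x, pos x) ∈ V × ℤ`, and
`ofPos` inverts `pos` on `{inl v} ∪ legs`. -/
def legPos : Fin k ⊕ Fin m → ℤ
  | .inl i => i + 1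
  | .inr j => -(j + 1)

def base (v : V) : V ⊕ (Fin k ⊕ Fin m) → V
  | .inl a => a
  | .inr _ => v

def pos : V ⊕ (Fin k ⊕ Fin m) → ℤ
  | .inl _ => 0
  | .inr p => legPos p

def ofPos (v : V) (k m : ℕ) (t : ℤ) : V ⊕ (Fin k ⊕ Fin m) :=
  if h : 0 < t ∧ t ≤ k then .inr (.inl ⟨t.toNat - 1, by omega⟩)
  else if h' : t < 0 ∧ -(m : ℤ) ≤ t then .inr (.inr ⟨(-t).toNat - 1, by omega⟩)
  else .inl v

noncomputable def legPositions (k m : ℕ) : Finset ℤ := (Icc (-(m : ℤ)) k).erase 0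

lemma ofPos_zero (v : V) : ofPos v k m 0 = .inl v := by
  simp [ofPos]

lemma ofPos_legPos (v : V) (p : Fin k ⊕ Fin m) : ofPos v k m (legPos p) = .inr p := by
  rcases p with ⟨i, hi⟩ | ⟨j, hj⟩
  · simp [ofPos, legPos, hi]
  · rw [ofPos, dif_neg (by simp [legPos]), dif_pos (by simp [legPos]; omega)]
    simp [legPos]

lemma legPos_mem_legPositions (p : Fin k ⊕ Fin m) : legPos p ∈ legPositions k m := by
  rcases p with ⟨i, hi⟩ | ⟨j, hj⟩ <;> simp [legPositions, legPos] <;> omega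

lemma legPos_mem_Icc (p : Fin k ⊕ Fin m) : legPos p ∈ Icc (-(m : ℤ)) k :=
  mem_of_mem_erase (legPos_mem_legPositions p)

lemma sum_legPos {M : Type*} [AddCommMonoid M] (g : ℤ → M) :
    ∑ p : Fin k ⊕ Fin m, g (legPos p) = ∑ t ∈ legPositions k m, g t := by
  refine sum_nbij legPos (fun p _ ↦ legPos_mem_legPositions p) ?_ ?_ fun _ _ ↦ rfl
  · rintro (⟨i, hi⟩ | ⟨j, hj⟩) - (⟨i', hi'⟩ | ⟨j', hj'⟩) - h <;> simp [legPos] at h ⊢ <;> omega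
  · intro t ht
    rw [mem_coe, legPositions, mem_erase, mem_Icc] at ht
    rcases lt_or_gt_of_ne ht.1 with h | h
    · exact ⟨.inr ⟨(-t).toNat - 1, by omega⟩, by simp, by simp [legPos]; omega⟩
    · exact ⟨.inl ⟨t.toNat - 1, by omega⟩, by simp, by simp [legPos]; omega⟩

lemma insert_zero_legPositions : insert 0 (legPositions k m) = Icc (-(m : ℤ)) k :=
  insert_erase (by simp)

lemma legPositions_succ_left :
    legPositions (k + 1) m = insert ((k : ℤ) + 1) (legPositions k m) := by
  ext t; simp [legPositions]; omega

lemma legPositions_succ_right :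
    legPositions k (m + 1) = insert (-((m : ℤ) + 1)) (legPositions k m) := by
  ext t; simp [legPositions]; omega

lemma sum_legPositions_succ_left_lt (d : ℕ) (h : m < k) :
    ∑ t ∈ legPositions (k + 1) m, ((d + t.natAbs : ℕ) : ℝ)⁻¹ <
      ∑ t ∈ legPositions k (m + 1), ((d + t.natAbs : ℕ) : ℝ)⁻¹ := by
  rw [legPositions_succ_left, legPositions_succ_right, sum_insert (by simp [legPositions]),
    sum_insert (by simp [legPositions])]
  gcongr ?_ + _
  rw [show ((k : ℤ) + 1).natAbs = k + 1 by omega, show (-((m : ℤ) + 1)).natAbs = m + 1 by omega]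
  gcongr

variable {G : SimpleGraph V} {v : V}

lemma adj_inl_inl {a b : V} (h : G.Adj a b) :
    (attachTwoPaths G v k m).Adj (.inl a) (.inl b) := by
  simp [attachTwoPaths, h, h.ne]

def inlHom : G →g attachTwoPaths G v k m := ⟨Sum.inl, adj_inl_inl⟩

lemma adj_ofPos_ofPos_add_one {t : ℤ} (h₁ : -(m : ℤ) ≤ t) (h₂ : t < k) :
    (attachTwoPaths G v k m).Adj (ofPos v k m t) (ofPos v k m (t + 1)) := by
  rw [attachTwoPaths, fromRel_adj]
  unfold ofPos
  split_ifs <;> simp <;> omega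

lemma exists_walk_ofPos {s t : ℤ} (hs : s ∈ Icc (-(m : ℤ)) k) (ht : t ∈ Icc (-(m : ℤ)) k) :
    ∃ p : (attachTwoPaths G v k m).Walk (ofPos v k m s) (ofPos v k m t),
      p.length = (s - t).natAbs := by
  have hadj : ∀ t, -(m : ℤ) ≤ t → t < k →
      (attachTwoPaths G v k m).Adj (ofPos v k m t) (ofPos v k m (t + 1)) :=
    fun _ ↦ adj_ofPos_ofPos_add_one
  rw [mem_Icc] at hs ht
  rcases le_total s t with hst | hts
  · obtain ⟨p, hp⟩ := exists_walk_length_eq_of_adj_add_one hadj hs.1 hst ht.2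
    exact ⟨p, by omega⟩
  · obtain ⟨p, hp⟩ := exists_walk_length_eq_of_adj_add_one hadj ht.1 hts hs.2
    exact ⟨p.reverse, by simp; omega⟩

lemma reachable_inl_v (hG : G.Connected) (x : V ⊕ (Fin k ⊕ Fin m)) :
    (attachTwoPaths G v k m).Reachable (.inl v) x := by
  rcases x with a | p
  · exact (hG v a).map inlHom
  · rw [← ofPos_zero (k := k) (m := m), ← ofPos_legPos v p]
    obtain ⟨w, -⟩ := exists_walk_ofPos (G := G) (s := 0) (by simp) (legPos_mem_Icc p)
    exact ⟨w⟩

lemma dist_base_add_natAbs_le_one_of_adj {x y : V ⊕ (Fin k ⊕ Fin m)}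
    (h : (attachTwoPaths G v k m).Adj x y) :
    G.dist (base v x) (base v y) + (pos x - pos y).natAbs ≤ 1 := by
  rw [attachTwoPaths, fromRel_adj] at h
  rcases h.2 with (⟨a, b, hab, rfl, rfl⟩ | ⟨i, hi, rfl, rfl⟩ | ⟨j, hj, rfl, rfl⟩ |
      ⟨i, i', rfl, rfl, hi⟩ | ⟨j, j', rfl, rfl, hj⟩) |
    (⟨a, b, hab, rfl, rfl⟩ | ⟨i, hi, rfl, rfl⟩ | ⟨j, hj, rfl, rfl⟩ |
      ⟨i, i', rfl, rfl, hi⟩ | ⟨j, j', rfl, rfl, hj⟩) <;>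
    simp [base, pos, legPos, Nat.le_one_iff_eq_zero_or_eq_one, dist_eq_one_iff_adj, adj_comm, *]

lemma dist_base_add_natAbs_le_length (hG : G.Connected) {x y : V ⊕ (Fin k ⊕ Fin m)}
    (p : (attachTwoPaths G v k m).Walk x y) :
    G.dist (base v x) (base v y) + (pos x - pos y).natAbs ≤ p.length := by
  induction p with
  | nil => simp
  | @cons x z y h p ih =>
    have hxz := dist_base_add_natAbs_le_one_of_adj h
    have := hG.dist_triangle (u := base v x) (v := base v z) (w := base v y)
    simp only [Walk.length_cons]
    omega

end AttachTwoPaths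

section

open AttachTwoPaths

variable {V : Type*} {G : SimpleGraph V} {v : V} {k m : ℕ}

theorem attachTwoPaths_connected (hG : G.Connected) : (attachTwoPaths G v k m).Connected :=
  (connected_iff_exists_forall_reachable _).2 ⟨.inl v, reachable_inl_v hG⟩

theorem dist_attachTwoPaths (hG : G.Connected) (x y : V ⊕ (Fin k ⊕ Fin m)) :
    (attachTwoPaths G v k m).dist x y = G.dist (base v x) (base v y) + (pos x - pos y).natAbs := by
  have hconn := attachTwoPaths_connected (v := v) (k := k) (m := m) hG
  refine le_antisymm ?_ ?_
  · have hinl (a b : V) : (attachTwoPaths G v k m).dist (.inl a) (.inl b) ≤ G.dist a b := by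
      obtain ⟨p, hp⟩ := hG.exists_walk_length_eq_dist a b
      exact (dist_le (p.map inlHom)).trans_eq (by simp [hp])
    have hinr (p q : Fin k ⊕ Fin m) :
        (attachTwoPaths G v k m).dist (.inr p) (.inr q) ≤ (legPos p - legPos q).natAbs := by
      rw [← ofPos_legPos v p, ← ofPos_legPos v q]
      obtain ⟨w, hw⟩ := exists_walk_ofPos (G := G) (legPos_mem_Icc p) (legPos_mem_Icc q)
      exact hw ▸ dist_le w
    have hinl_inr (a : V) (q : Fin k ⊕ Fin m) :
        (attachTwoPaths G v k m).dist (.inl a) (.inr q) ≤ G.dist a v + (legPos q).natAbs := by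
      have hv : (attachTwoPaths G v k m).dist (.inl v) (.inr q) ≤ (legPos q).natAbs := by
        rw [← ofPos_zero (k := k) (m := m), ← ofPos_legPos v q]
        obtain ⟨w, hw⟩ := exists_walk_ofPos (G := G) (s := 0) (by simp) (legPos_mem_Icc q)
        simpa [hw] using dist_le w
      have := hconn.dist_triangle (u := .inl a) (v := .inl v) (w := .inr q)
      have := hinl a v
      omega
    rcases x with a | p <;> rcases y with b | q
    · simpa [base, pos] using hinl a b
    · simpa [base, pos] using hinl_inr a q
    · simpa [base, pos, SimpleGraph.dist_comm] using hinl_inr b p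
    · simpa [base, pos] using hinr p q
  · obtain ⟨p, hp⟩ := hconn.exists_walk_length_eq_dist x y
    exact hp ▸ dist_base_add_natAbs_le_length hG p

lemma sum_inv_dist_attachTwoPaths [Fintype V] (hG : G.Connected) :
    ∑ x, ∑ y, ((attachTwoPaths G v k m).dist x y : ℝ)⁻¹ =
      ∑ a, ∑ b, (G.dist a b : ℝ)⁻¹ +
        2 * ∑ a, ∑ t ∈ legPositions k m, ((G.dist a v + t.natAbs : ℕ) : ℝ)⁻¹ +
        lineHararySum (legPositions k m) := by
  have hleg (a : V) : ∑ q : Fin k ⊕ Fin m, ((G.dist a v + (legPos q).natAbs : ℕ) : ℝ)⁻¹ =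
      ∑ t ∈ legPositions k m, ((G.dist a v + t.natAbs : ℕ) : ℝ)⁻¹ :=
    sum_legPos fun t ↦ ((G.dist a v + t.natAbs : ℕ) : ℝ)⁻¹
  have hline : ∑ p : Fin k ⊕ Fin m, ∑ q : Fin k ⊕ Fin m, ((legPos p - legPos q).natAbs : ℝ)⁻¹ =
      lineHararySum (legPositions k m) := by
    rw [sum_legPos fun s ↦ ∑ q : Fin k ⊕ Fin m, ((s - legPos q).natAbs : ℝ)⁻¹, lineHararySum]
    exact sum_congr rfl fun s _ ↦ sum_legPos fun t ↦ ((s - t).natAbs : ℝ)⁻¹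
  simp only [dist_attachTwoPaths hG, Fintype.sum_sum_type (α₁ := V), base, pos, sub_zero,
    zero_sub, Int.natAbs_neg, Int.natAbs_zero, add_zero, dist_self, zero_add, sum_add_distrib,
    hleg, hline]
  rw [sum_comm (s := (univ : Finset (Fin k ⊕ Fin m)))]
  simp only [SimpleGraph.dist_comm (u := v), hleg]
  ring

/- The pairs `{v, t}` with `t` on a leg move from the second sum of
`sum_inv_dist_attachTwoPaths` into the path term. -/
theorem harary_attachTwoPaths [Fintype V] [DecidableEq V] (hG : G.Connected) :
    harary (attachTwoPaths G v k m) = harary G + lineHararySum (Icc (-(m : ℤ)) k) / 2 +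
      ∑ a ∈ univ.erase v, ∑ t ∈ legPositions k m, ((G.dist a v + t.natAbs : ℕ) : ℝ)⁻¹ := by
  rw [harary_eq_sum_inv, harary_eq_sum_inv, sum_inv_dist_attachTwoPaths hG,
    ← insert_zero_legPositions, lineHararySum_insert (by simp [legPositions]),
    ← add_sum_erase _ (fun a ↦ ∑ t ∈ legPositions k m, ((G.dist a v + t.natAbs : ℕ) : ℝ)⁻¹)
      (mem_univ v)]
  simp only [dist_self, zero_add, sub_zero]
  ring

end

theorem harary_attach_paths_lt {V : Type*} [Fintype V] (G : SimpleGraph V)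
    (hG : G.Connected) (hV : 2 ≤ Fintype.card V) (v : V) (k m : ℕ)
    (hm : 1 ≤ m) (hmk : m ≤ k) :
    harary (attachTwoPaths G v (k + 1) (m - 1)) < harary (attachTwoPaths G v k m) := by
  classical
  obtain ⟨m, rfl⟩ := Nat.exists_eq_add_of_le' hm
  obtain ⟨a, ha⟩ := Fintype.exists_ne_of_one_lt_card hV v
  have hshift : lineHararySum (Icc (-(m : ℤ)) ↑(k + 1)) = lineHararySum (Icc (-↑(m + 1)) k) := by
    rw [← lineHararySum_Icc_add _ _ (-1)]
    congr 2 <;> push_cast <;> ring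
  rw [Nat.add_sub_cancel, harary_attachTwoPaths hG, harary_attachTwoPaths hG, hshift]
  exact (add_lt_add_iff_left _).2 (sum_lt_sum_of_nonempty ⟨a, mem_erase.2 ⟨ha, mem_univ a⟩⟩
    fun b _ ↦ AttachTwoPaths.sum_legPositions_succ_left_lt _ (by omega))
end

section
/- Let T = S(n₁,…,n_k) be a spider with n vertices and k ≥ 2 legs of lengths n₁,…,n_k ≥ 1. Then H(B_{n,k}) ≤ H(T) ≤ H(BS_{n,k}); the left equality holds if and only if T is isomorphic to B_{n,k}, and the right equality holds if and only if T is isomorphic to BS_{n,k}. -/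
open Finset SimpleGraph

/-!
Distances in a spider are explicit, so its Harary index is `∑ᵢ P(ℓᵢ) + ∑_{i<j} C(ℓᵢ, ℓⱼ)`, where
`P(ℓ)` is the index of the path formed by the centre and a leg of length `ℓ` and `C(a, b)` collects
the pairs lying on two different legs. Two legs together with the centre form a path, so
`P(a) + P(b) + C(a, b) = P(a + b)`: moving a vertex from one leg to another only changes the cross
terms with the remaining legs. Since `C(·, m)` is strictly concave, moving a vertex to a leg at
least as long strictly decreases the index, and moving it to a leg shorter by at least two strictly
increases it. With `k ≥ 3` there is a third leg, and descending on `∑ ℓᵢ²` leads to the broom and to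
the balanced spider respectively, both determined up to permuting the legs. For `k = 2` every
spider is a path.
-/

theorem or_lt_of_exists_improvement {α β : Type*} [Preorder β] {s : Set α} {p : α → Prop}
    {f : α → β} {c : β} (μ : α → ℕ) (hp : ∀ x ∈ s, p x → f x ≤ c)
    (himp : ∀ x ∈ s, ¬p x → ∃ y ∈ s, μ y < μ x ∧ f x < f y) : ∀ x ∈ s, p x ∨ f x < c := by
  intro x
  induction x using (measure μ).wf.induction with
  | _ x ih =>
    intro hx
    by_cases hpx : p x
    · exact .inl hpx
    obtain ⟨y, hy, hμ, hxy⟩ := himp x hx hpx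
    refine .inr (hxy.trans_le ?_)
    rcases ih y hμ hy with hpy | hyc
    · exact hp y hy hpy
    · exact hyc.le

lemma sum_ite_eq_add_sum_ite {ι M : Type*} [Fintype ι] [DecidableEq ι] [AddCommMonoid M] (i : ι)
    (a : M) (f : ι → M) :
    ∑ i', (if i = i' then a else f i') = a + ∑ i', if i = i' then 0 else f i' := by
  rw [← Fintype.sum_ite_eq i fun _ => a, ← Finset.sum_add_distrib]
  exact Finset.sum_congr rfl fun i' _ => by split_ifs <;> simp

lemma univ_eq_insert_insert_erase_erase {ι : Type*} [Fintype ι] [DecidableEq ι] {i₁ i₂ : ι}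
    (h : i₁ ≠ i₂) : (univ : Finset ι) = insert i₁ (insert i₂ ((univ.erase i₁).erase i₂)) := by
  rw [Finset.insert_erase (Finset.mem_erase.mpr ⟨h.symm, mem_univ _⟩),
    Finset.insert_erase (mem_univ _)]

namespace SimpleGraph

variable {V W : Type*} {G : SimpleGraph V} {H : SimpleGraph W}

lemma edist_map_le (f : G →g H) (u v : V) : H.edist (f u) (f v) ≤ G.edist u v := by
  rw [edist_eq_sInf, edist_eq_sInf, sInf_range, sInf_range]
  exact iInf_mono' fun p => ⟨p.map f, by simp⟩

lemma Iso.dist_map (e : G ≃g H) (u v : V) : H.dist (e u) (e v) = G.dist u v := by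
  refine congrArg ENat.toNat (le_antisymm (edist_map_le e.toHom u v) ?_)
  simpa using edist_map_le e.symm.toHom (e u) (e v)

lemma Walk.abs_sub_le_length {f : V → ℤ} (hf : ∀ x y, G.Adj x y → |f x - f y| ≤ 1)
    {u v : V} (p : G.Walk u v) : |f u - f v| ≤ p.length := by
  induction p with
  | nil => simp
  | @cons x y z h p ih =>
    rw [Walk.length_cons, Nat.cast_succ]
    calc |f x - f z| ≤ |f x - f y| + |f y - f z| := abs_sub_le _ _ _
      _ ≤ _ := by linarith [hf x y h]

lemma dist_eq_length_of_le_abs_sub {f : V → ℤ} (hf : ∀ x y, G.Adj x y → |f x - f y| ≤ 1)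
    {u v : V} (p : G.Walk u v) (hp : p.length ≤ |f u - f v|) : G.dist u v = p.length := by
  obtain ⟨q, hq⟩ := Reachable.exists_walk_length_eq_dist ⟨p⟩
  have := q.abs_sub_le_length hf
  have := dist_le p
  omega

end SimpleGraph

lemma harary_eq_sum_inv_dist {V : Type*} [Fintype V] (G : SimpleGraph V) :
    harary G = (∑ u, ∑ v, 1 / (G.dist u v : ℝ)) / 2 := by
  simp only [harary]
  congr 1
  refine Finset.sum_congr rfl fun u _ => Finset.sum_congr rfl fun v _ => ?_
  split_ifs with h <;> simp [h]

lemma harary_eq_of_iso {V W : Type*} [Fintype V] [Fintype W] {G : SimpleGraph V}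
    {H : SimpleGraph W} (e : G ≃g H) : harary G = harary H := by
  simp only [harary_eq_sum_inv_dist]
  congr 1
  refine Fintype.sum_equiv e.toEquiv _ _ fun u => Fintype.sum_equiv e.toEquiv _ _ fun v => ?_
  simp [← e.dist_map u v]

section SpiderDistance

variable {k : ℕ} {L : Fin k → ℕ}

@[simp] lemma spider_adj_none_some {i : Fin k} {j : Fin (L i)} :
    (spider L).Adj none (some ⟨i, j⟩) ↔ (j : ℕ) = 0 := by
  simp only [spider, fromRel_adj]
  constructor
  · rintro ⟨-, (⟨_, _, -, h, h₀⟩ | ⟨_, _, _, h, -⟩) | (⟨_, _, h, -⟩ | ⟨_, _, _, -, h, -⟩)⟩ <;>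
      cases h
    exact h₀
  · intro h
    exact ⟨by simp, .inl (.inl ⟨i, j, trivial, rfl, h⟩)⟩

@[simp] lemma spider_adj_some_some {i i' : Fin k} {j : Fin (L i)} {j' : Fin (L i')} :
    (spider L).Adj (some ⟨i, j⟩) (some ⟨i', j'⟩) ↔
      i = i' ∧ ((j' : ℕ) = j + 1 ∨ (j : ℕ) = j' + 1) := by
  simp only [spider, fromRel_adj]
  constructor
  · rintro ⟨-, (⟨_, _, h, -⟩ | ⟨_, _, _, h, h', hs⟩) | (⟨_, _, h, -⟩ | ⟨_, _, _, h, h', hs⟩)⟩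
    · cases h
    · cases h; cases h'; exact ⟨rfl, .inl hs⟩
    · cases h
    · cases h; cases h'; exact ⟨rfl, .inr hs⟩
  · rintro ⟨rfl, hs | hs⟩
    · exact ⟨by simp [Fin.ext_iff]; omega, .inl (.inr ⟨i, j, j', rfl, rfl, hs⟩)⟩
    · exact ⟨by simp [Fin.ext_iff]; omega, .inr (.inr ⟨i, j', j, rfl, rfl, hs⟩)⟩

@[simp] lemma spider_adj_some_none {i : Fin k} {j : Fin (L i)} :
    (spider L).Adj (some ⟨i, j⟩) none ↔ (j : ℕ) = 0 := by
  rw [adj_comm, spider_adj_none_some]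

def signedHeight (i₀ : Fin k) : Option (Σ i : Fin k, Fin (L i)) → ℤ
  | none => 0
  | some ⟨i, j⟩ => if i = i₀ then j + 1 else -(j + 1)

lemma abs_signedHeight_sub_le_one (i₀ : Fin k) :
    ∀ x y, (spider L).Adj x y → |signedHeight i₀ x - signedHeight i₀ y| ≤ 1
  | none, none, h => (h.ne rfl).elim
  | none, some ⟨i, j⟩, h => by
    simp only [spider_adj_none_some] at h
    simp only [signedHeight, h]; split_ifs <;> simp
  | some ⟨i, j⟩, none, h => by
    simp only [spider_adj_some_none] at h
    simp only [signedHeight, h]; split_ifs <;> simp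
  | some ⟨i, j⟩, some ⟨i', j'⟩, h => by
    obtain ⟨rfl, h⟩ := spider_adj_some_some.mp h
    simp only [signedHeight]
    split_ifs <;> rw [abs_le] <;> omega

lemma exists_walk_along_leg (i : Fin k) (j : Fin (L i)) :
    ∀ (d : ℕ) (j' : Fin (L i)), (j' : ℕ) = j + d →
      ∃ p : (spider L).Walk (some ⟨i, j⟩) (some ⟨i, j'⟩), p.length = d
  | 0, j', h => by
    obtain rfl : j' = j := Fin.ext h
    exact ⟨.nil, rfl⟩
  | d + 1, j', h => by
    obtain ⟨p, hp⟩ := exists_walk_along_leg i j d ⟨j + d, by have := j'.isLt; omega⟩ rfl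
    exact ⟨p.concat (spider_adj_some_some.mpr ⟨rfl, .inl (by simp [h]; omega)⟩), by simp [hp]⟩

lemma exists_walk_from_center (i : Fin k) (j : Fin (L i)) :
    ∃ p : (spider L).Walk none (some ⟨i, j⟩), p.length = j + 1 := by
  obtain ⟨p, hp⟩ := exists_walk_along_leg i ⟨0, by have := j.isLt; omega⟩ j j (by simp)
  exact ⟨.cons (spider_adj_none_some.mpr rfl) p, by simp [hp]⟩

lemma spider_dist_none_some (i : Fin k) (j : Fin (L i)) :
    (spider L).dist none (some ⟨i, j⟩) = j + 1 := by
  obtain ⟨p, hp⟩ := exists_walk_from_center i j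
  rw [← hp]
  refine dist_eq_length_of_le_abs_sub (abs_signedHeight_sub_le_one i) p ?_
  simp only [signedHeight, if_pos, hp]
  exact le_abs.mpr (.inr (by push_cast; omega))

lemma spider_dist_some_some_of_le {i : Fin k} {j j' : Fin (L i)} (h : j ≤ j') :
    (spider L).dist (some ⟨i, j⟩) (some ⟨i, j'⟩) = j' - j := by
  obtain ⟨p, hp⟩ := exists_walk_along_leg i j (j' - j) j' (by omega)
  rw [← hp]
  refine dist_eq_length_of_le_abs_sub (abs_signedHeight_sub_le_one i) p ?_
  simp only [signedHeight, if_pos, hp]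
  exact le_abs.mpr (.inr (by have := Fin.le_iff_val_le_val.mp h; omega))

lemma spider_dist_some_some_of_ne {i i' : Fin k} (hi : i ≠ i') (j : Fin (L i)) (j' : Fin (L i')) :
    (spider L).dist (some ⟨i, j⟩) (some ⟨i', j'⟩) = j + j' + 2 := by
  obtain ⟨p, hp⟩ := exists_walk_from_center i j
  obtain ⟨p', hp'⟩ := exists_walk_from_center i' j'
  have hlen : (p.reverse.append p').length = j + j' + 2 := by simp [hp, hp']; omega
  rw [← hlen]
  refine dist_eq_length_of_le_abs_sub (abs_signedHeight_sub_le_one i') _ ?_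
  simp only [signedHeight, if_neg hi, if_pos, hlen]
  exact le_abs.mpr (.inr (by push_cast; omega))

lemma spider_dist_some_some (i i' : Fin k) (j : Fin (L i)) (j' : Fin (L i')) :
    ((spider L).dist (some ⟨i, j⟩) (some ⟨i', j'⟩) : ℝ) =
      if i = i' then |(j : ℝ) - j'| else j + j' + 2 := by
  split_ifs with hi
  · subst hi
    rcases le_total j j' with h | h
    · rw [spider_dist_some_some_of_le h, abs_of_nonpos (by simpa using h)]
      push_cast [Fin.le_iff_val_le_val.mp h]; ring
    · rw [dist_comm, spider_dist_some_some_of_le h, abs_of_nonneg (by simpa using h)]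
      push_cast [Fin.le_iff_val_le_val.mp h]; ring
  · rw [spider_dist_some_some_of_ne hi]
    push_cast; ring

end SpiderDistance

/-- The Harary index of the path formed by the centre and a leg with `m` vertices; the diagonal
terms vanish because `1 / 0 = 0`. -/
noncomputable def legHarary (m : ℕ) : ℝ :=
  ∑ j : Fin m, 1 / ((j : ℝ) + 1) + (∑ j : Fin m, ∑ j' : Fin m, 1 / |(j : ℝ) - j'|) / 2

/-- Pairs with one vertex on a leg with `a` vertices and one on another leg with `b` vertices:
the `j`-th and `j'`-th vertices are at distance `j + j' + 2`. -/
noncomputable def crossHarary (a b : ℕ) : ℝ :=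
  ∑ j : Fin a, ∑ j' : Fin b, 1 / ((j : ℝ) + j' + 2)

noncomputable def spiderHarary {ι : Type*} [DecidableEq ι] (L : ι → ℕ) (s : Finset ι) : ℝ :=
  ∑ i ∈ s, legHarary (L i) +
    (∑ i ∈ s, ∑ i' ∈ s, if i = i' then 0 else crossHarary (L i) (L i')) / 2

theorem harary_spider {k : ℕ} (L : Fin k → ℕ) : harary (spider L) = spiderHarary L univ := by
  have block : ∀ i i' : Fin k, ∑ j : Fin (L i), ∑ j' : Fin (L i'),
      1 / ((spider L).dist (some ⟨i, j⟩) (some ⟨i', j'⟩) : ℝ) =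
        if i = i' then ∑ j : Fin (L i), ∑ j' : Fin (L i), 1 / |(j : ℝ) - j'|
        else crossHarary (L i) (L i') := by
    intro i i'
    split_ifs with h
    · subst h
      simp [spider_dist_some_some]
    · simp [spider_dist_some_some, h, crossHarary]
  have row : ∀ i : Fin k, ∑ i', ∑ j : Fin (L i), ∑ j' : Fin (L i'),
      1 / ((spider L).dist (some ⟨i, j⟩) (some ⟨i', j'⟩) : ℝ) =
        ∑ j : Fin (L i), ∑ j' : Fin (L i), 1 / |(j : ℝ) - j'| +
          ∑ i', if i = i' then 0 else crossHarary (L i) (L i') := fun i => by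
    rw [Finset.sum_congr rfl fun i' _ => block i i', sum_ite_eq_add_sum_ite]
  rw [harary_eq_sum_inv_dist]
  simp only [Fintype.sum_option, Fintype.sum_sigma, dist_self, spider_dist_none_some,
    dist_comm (u := some _) (v := none), Finset.sum_add_distrib]
  rw [Finset.sum_congr rfl fun i _ => Finset.sum_comm]
  simp only [row, Finset.sum_add_distrib, spiderHarary, legHarary, ← Finset.sum_div]
  push_cast
  ring

section SpiderIso

variable {k : ℕ}

def spiderCompPermIso (M : Fin k → ℕ) (σ : Equiv.Perm (Fin k)) : spider (M ∘ σ) ≃g spider M where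
  toEquiv := (Equiv.sigmaCongrLeft σ (β := fun i => Fin (M i))).optionCongr
  map_rel_iff' := by
    rintro (_ | ⟨i, j⟩) (_ | ⟨i', j'⟩) <;> simp

lemma nonempty_spider_iso_of_eq_comp_perm {L M : Fin k → ℕ} (σ : Equiv.Perm (Fin k))
    (h : L = M ∘ σ) : Nonempty (spider L ≃g spider M) :=
  h ▸ ⟨spiderCompPermIso M σ⟩

def twoLegPos (L : Fin 2 → ℕ) : Option (Σ i : Fin 2, Fin (L i)) → ℕ
  | none => L 0
  | some ⟨i, j⟩ => if i = 0 then L 0 - 1 - j else L 0 + 1 + j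

lemma twoLegPos_lt (L : Fin 2 → ℕ) (x : Option (Σ i : Fin 2, Fin (L i))) :
    twoLegPos L x < L 0 + L 1 + 1 := by
  rcases x with _ | ⟨i, j⟩
  · simp [twoLegPos]
  · fin_cases i <;> simp [twoLegPos] <;> omega

lemma twoLegPos_injective (L : Fin 2 → ℕ) : Function.Injective (twoLegPos L) := by
  rintro (_ | ⟨i, j⟩) (_ | ⟨i', j'⟩) h
  all_goals (try fin_cases i) <;> (try fin_cases i') <;> simp [twoLegPos] at h ⊢ <;> omega

noncomputable def spiderTwoLegIsoPath (L : Fin 2 → ℕ) : spider L ≃g pathG (L 0 + L 1 + 1) where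
  toEquiv := Equiv.ofBijective (fun x => ⟨twoLegPos L x, twoLegPos_lt L x⟩) <|
    (Fintype.bijective_iff_injective_and_card _).mpr
      ⟨fun x y h => twoLegPos_injective L (Fin.ext_iff.mp h), by simp [Fin.sum_univ_two]⟩
  map_rel_iff' := by
    rintro (_ | ⟨i, j⟩) (_ | ⟨i', j'⟩)
    all_goals (try fin_cases i) <;> (try fin_cases i') <;>
      simp [pathG, twoLegPos] <;> omega

lemma nonempty_spider_iso_of_two_legs {L M : Fin 2 → ℕ} (h : L 0 + L 1 = M 0 + M 1) :
    Nonempty (spider L ≃g spider M) := by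
  have e := spiderTwoLegIsoPath L
  rw [h] at e
  exact ⟨e.trans (spiderTwoLegIsoPath M).symm⟩

end SpiderIso

lemma legHarary_zero : legHarary 0 = 0 := by simp [legHarary]

lemma crossHarary_zero_left (b : ℕ) : crossHarary 0 b = 0 := by simp [crossHarary]

lemma crossHarary_comm (a b : ℕ) : crossHarary a b = crossHarary b a := by
  rw [crossHarary, crossHarary, Finset.sum_comm]
  simp only [add_comm ((_ : Fin a) : ℝ)]

lemma crossHarary_succ_left (a b : ℕ) :
    crossHarary (a + 1) b = crossHarary a b + ∑ j : Fin b, 1 / ((a : ℝ) + j + 2) := by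
  simp [crossHarary, Fin.sum_univ_castSucc]

lemma crossHarary_add_lt {a b m : ℕ} (hba : b < a) (hm : 0 < m) :
    crossHarary (a + 1) m + crossHarary b m < crossHarary a m + crossHarary (b + 1) m := by
  have hlt : ∑ j : Fin m, 1 / ((a : ℝ) + j + 2) < ∑ j : Fin m, 1 / ((b : ℝ) + j + 2) := by
    refine Finset.sum_lt_sum_of_nonempty (Finset.univ_nonempty_iff.mpr ⟨⟨0, hm⟩⟩) fun j _ => ?_
    gcongr
  rw [crossHarary_succ_left, crossHarary_succ_left]
  linarith

section SpiderHarary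

variable {ι : Type*} [DecidableEq ι] {L L' : ι → ℕ} {s : Finset ι}

lemma spiderHarary_singleton (L : ι → ℕ) (i : ι) : spiderHarary L {i} = legHarary (L i) := by
  simp [spiderHarary]

lemma spiderHarary_insert {i : ι} (h : i ∉ s) :
    spiderHarary L (insert i s) =
      legHarary (L i) + ∑ m ∈ s, crossHarary (L i) (L m) + spiderHarary L s := by
  have hne : ∀ m ∈ s, i ≠ m := fun m hm him => h (him ▸ hm)
  simp only [spiderHarary, Finset.sum_insert h, Finset.sum_add_distrib, ↓reduceIte, zero_add]
  rw [Finset.sum_ite_of_false hne, Finset.sum_ite_of_false fun m hm => (hne m hm).symm]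
  simp only [crossHarary_comm (L _) (L i)]
  ring

lemma spiderHarary_congr (h : ∀ i ∈ s, L i = L' i) : spiderHarary L s = spiderHarary L' s := by
  simp only [spiderHarary]
  rw [Finset.sum_congr rfl fun i hi => by rw [h i hi], Finset.sum_congr rfl fun i hi =>
    Finset.sum_congr rfl fun i' hi' => by rw [h i hi, h i' hi']]

end SpiderHarary

lemma legHarary_add (a b : ℕ) :
    legHarary a + legHarary b + crossHarary a b = legHarary (a + b) := by
  obtain ⟨e⟩ := nonempty_spider_iso_of_two_legs (L := ![a, b]) (M := ![0, a + b]) (by simp)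
  have h := harary_eq_of_iso e
  have huniv : (univ : Finset (Fin 2)) = insert 0 {1} := by decide
  rw [harary_spider, harary_spider, huniv] at h
  simp [spiderHarary_insert, spiderHarary_singleton, legHarary_zero, crossHarary_zero_left] at h
  linarith

lemma spiderHarary_insert_insert {ι : Type*} [DecidableEq ι] {L : ι → ℕ} {s : Finset ι}
    {i₁ i₂ : ι} (h : i₁ ≠ i₂) (h₁ : i₁ ∉ s) (h₂ : i₂ ∉ s) :
    spiderHarary L (insert i₁ (insert i₂ s)) = legHarary (L i₁ + L i₂) +
      ∑ m ∈ s, (crossHarary (L i₁) (L m) + crossHarary (L i₂) (L m)) + spiderHarary L s := by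
  rw [spiderHarary_insert (by simp [h, h₁]), spiderHarary_insert h₂, Finset.sum_insert h₂,
    ← legHarary_add, Finset.sum_add_distrib]
  ring

structure IsSpread {ι : Type*} (L L' : ι → ℕ) (i₁ i₂ : ι) : Prop where
  ne : i₁ ≠ i₂
  le : L i₂ ≤ L i₁
  apply_left : L' i₁ = L i₁ + 1
  apply_right : L' i₂ + 1 = L i₂
  apply_of_ne : ∀ m, m ≠ i₁ → m ≠ i₂ → L' m = L m

namespace IsSpread

variable {ι : Type*} [Fintype ι] [DecidableEq ι] {L L' : ι → ℕ} {i₁ i₂ : ι}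

lemma sum_comp_add (h : IsSpread L L' i₁ i₂) {M : Type*} [AddCommMonoid M] (g : ℕ → M) :
    ∑ i, g (L' i) + g (L i₁) + g (L i₂) = ∑ i, g (L i) + g (L' i₁) + g (L' i₂) := by
  have h₁ : i₁ ∉ insert i₂ ((univ.erase i₁).erase i₂) := by simp [h.ne]
  have h₂ : i₂ ∉ (univ.erase i₁).erase i₂ := by simp
  rw [univ_eq_insert_insert_erase_erase h.ne, Finset.sum_insert h₁, Finset.sum_insert h₂,
    Finset.sum_insert h₁, Finset.sum_insert h₂,
    Finset.sum_congr rfl fun m hm => by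
      rw [h.apply_of_ne m (Finset.mem_erase.mp (Finset.mem_erase.mp hm).2).1
        (Finset.mem_erase.mp hm).1]]
  abel

lemma sum_eq (h : IsSpread L L' i₁ i₂) : ∑ i, L' i = ∑ i, L i := by
  have := h.sum_comp_add id
  simp only [id] at this
  linarith [h.apply_left, h.apply_right]

lemma sum_sq_lt (h : IsSpread L L' i₁ i₂) : ∑ i, L i ^ 2 < ∑ i, L' i ^ 2 := by
  nlinarith [h.sum_comp_add (· ^ 2), h.apply_left, h.apply_right, h.le]

lemma spiderHarary_lt (h : IsSpread L L' i₁ i₂) (hL : ∀ i, 1 ≤ L i)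
    (hcard : 2 < Fintype.card ι) : spiderHarary L' univ < spiderHarary L univ := by
  set R := (univ.erase i₁).erase i₂
  have hR : R.Nonempty := by
    rw [← Finset.card_pos, Finset.card_erase_of_mem (Finset.mem_erase.mpr ⟨h.ne.symm, mem_univ _⟩),
      Finset.card_erase_of_mem (mem_univ _), Finset.card_univ]
    omega
  have hrest : ∀ m ∈ R, L' m = L m := fun m hm =>
    h.apply_of_ne m (Finset.mem_erase.mp (Finset.mem_erase.mp hm).2).1 (Finset.mem_erase.mp hm).1
  have hcross : ∑ m ∈ R, (crossHarary (L' i₁) (L' m) + crossHarary (L' i₂) (L' m)) <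
      ∑ m ∈ R, (crossHarary (L i₁) (L m) + crossHarary (L i₂) (L m)) :=
    Finset.sum_lt_sum_of_nonempty hR fun m hm => by
      rw [hrest m hm, h.apply_left, ← h.apply_right]
      exact crossHarary_add_lt (by have := h.le; have := h.apply_right; omega) (hL m)
  have hsum : L' i₁ + L' i₂ = L i₁ + L i₂ := by
    have := h.apply_left; have := h.apply_right; omega
  have h₁ : i₁ ∉ R := by simp [R]
  have h₂ : i₂ ∉ R := by simp [R]
  rw [univ_eq_insert_insert_erase_erase h.ne, spiderHarary_insert_insert h.ne h₁ h₂,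
    spiderHarary_insert_insert h.ne h₁ h₂, hsum, spiderHarary_congr hrest]
  linarith

end IsSpread

section Improvement

variable {ι : Type*} [DecidableEq ι] {L : ι → ℕ}

lemma exists_isSpread_of_not_broom [Nonempty ι] (hL : ∀ i, 1 ≤ L i)
    (h : ¬∃ i₀, ∀ i ≠ i₀, L i = 1) : ∃ L' i₁ i₂, IsSpread L L' i₁ i₂ ∧ ∀ i, 1 ≤ L' i := by
  push Not at h
  obtain ⟨a, -, ha⟩ := h (Classical.arbitrary ι)
  obtain ⟨b, hba, hb⟩ := h a
  obtain ⟨i₁, i₂, hne, hle, h₂⟩ : ∃ i₁ i₂, i₁ ≠ i₂ ∧ L i₂ ≤ L i₁ ∧ 2 ≤ L i₂ := by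
    rcases le_total (L a) (L b) with hab | hab
    · exact ⟨b, a, hba, hab, by have := hL a; omega⟩
    · exact ⟨a, b, hba.symm, hab, by have := hL b; omega⟩
  refine ⟨Function.update (Function.update L i₁ (L i₁ + 1)) i₂ (L i₂ - 1), i₁, i₂,
    ⟨hne, hle, by simp [hne], by simp; omega, fun m h₁ h₂ => by simp [h₁, h₂]⟩, fun i => ?_⟩
  have := hL i
  simp only [Function.update_apply]
  split_ifs <;> omega

lemma exists_isSpread_of_not_balanced (hL : ∀ i, 1 ≤ L i) (h : ¬∀ i j, L i ≤ L j + 1) :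
    ∃ L' i₁ i₂, IsSpread L' L i₁ i₂ ∧ ∀ i, 1 ≤ L' i := by
  push Not at h
  obtain ⟨i₁, i₂, h₁₂⟩ := h
  have hne : i₁ ≠ i₂ := fun h => by subst h; omega
  refine ⟨Function.update (Function.update L i₁ (L i₁ - 1)) i₂ (L i₂ + 1), i₁, i₂,
    ⟨hne, by simp [hne]; omega, by simp [hne]; omega, by simp, fun m h₁ h₂ => by simp [h₁, h₂]⟩,
    fun i => ?_⟩
  have := hL i
  simp only [Function.update_apply]
  split_ifs <;> omega

end Improvement

section LegPermutation

variable {k n : ℕ} {L : Fin k → ℕ}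

lemma nonempty_iso_broom_of_forall_ne_eq_one {i₀ : Fin k} (h : ∀ i ≠ i₀, L i = 1)
    (hn : n = ∑ i, L i + 1) : Nonempty (spider L ≃g broom n k) := by
  have hi₀ : L i₀ + (k - 1) = ∑ i, L i := by
    rw [← Finset.add_sum_erase _ _ (mem_univ i₀), Finset.sum_congr rfl fun i hi =>
      h i (Finset.mem_erase.mp hi).1]
    simp
  let z : Fin k := ⟨0, i₀.pos⟩
  refine nonempty_spider_iso_of_eq_comp_perm (Equiv.swap i₀ z) (funext fun i => ?_)
  have hz : ((Equiv.swap i₀ z i : Fin k) : ℕ) = 0 ↔ i = i₀ := by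
    rw [← Fin.val_mk i₀.pos, ← Fin.ext_iff, Equiv.swap_apply_eq_iff, Equiv.swap_apply_right]
  by_cases hi : i = i₀
  · subst hi
    simp only [Function.comp_apply, broomLegs, hz.mpr rfl, if_true]
    have := i.pos
    omega
  · simp only [Function.comp_apply, broomLegs, mt hz.mp hi, if_false, h i hi]

lemma nonempty_iso_BS_of_balanced (hk : 0 < k) (hbal : ∀ i j, L i ≤ L j + 1)
    (hn : n = ∑ i, L i + 1) : Nonempty (spider L ≃g BS n k) := by
  have : Nonempty (Fin k) := ⟨⟨0, hk⟩⟩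
  obtain ⟨i₀, hmin⟩ := Finite.exists_min L
  set a := L i₀
  set s : Finset (Fin k) := {i | L i = a + 1}
  have hL : ∀ i, L i = a + if i ∈ s then 1 else 0 := fun i => by
    have := hmin i; have := hbal i i₀
    by_cases h : L i = a + 1
    · simp [s, h]
    · simp [s, h]; omega
  have hs : #s < k := by
    simpa using Finset.card_lt_univ_of_notMem (s := s) (x := i₀) (by simp [s, a])
  have hsum : n - 1 = a * k + #s := by
    rw [hn, Finset.sum_congr rfl fun i _ => hL i, Finset.sum_add_distrib, Finset.sum_boole]
    simp [mul_comm]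
  have hdiv : (n - 1) / k = a ∧ (n - 1) % k = #s :=
    (Nat.div_mod_unique hk).mpr ⟨by rw [hsum]; ring, hs⟩
  obtain ⟨σ, hσ⟩ := Equiv.Perm.exists_map_finset_eq s {i : Fin k | (i : ℕ) < #s}
    (by rw [Fin.card_filter_val_lt, min_eq_right hs.le])
  refine nonempty_spider_iso_of_eq_comp_perm σ (funext fun i => ?_)
  have hmem : (σ i : ℕ) < #s ↔ i ∈ s := by
    have := congrArg (σ i ∈ ·) hσ
    simpa [Finset.mem_map_equiv] using this.symm
  simp only [Function.comp_apply, balancedLegs, hdiv.1, hdiv.2, hmem, hL i]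

end LegPermutation

def spiderLegs (k n : ℕ) : Set (Fin k → ℕ) := {M | (∀ i, 1 ≤ M i) ∧ n = ∑ i, M i + 1}

section Extremal

variable {k n : ℕ} {L : Fin k → ℕ}

theorem nonempty_iso_broom_or_harary_broom_lt (hk : 2 ≤ k) (hL : ∀ i, 1 ≤ L i)
    (hn : n = ∑ i, L i + 1) :
    Nonempty (spider L ≃g broom n k) ∨ harary (broom n k) < harary (spider L) := by
  obtain rfl | hk := hk.eq_or_lt
  · left
    refine nonempty_spider_iso_of_two_legs ?_
    simp only [broomLegs, Fin.sum_univ_two] at hn ⊢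
    have := hL 0; have := hL 1
    simp; omega
  have : Nonempty (Fin k) := ⟨⟨0, by omega⟩⟩
  refine (or_lt_of_exists_improvement (s := spiderLegs k n)
    (p := fun M => Nonempty (spider M ≃g broom n k)) (f := fun M => -harary (spider M))
    (c := -harary (broom n k)) (fun M => (n - 1) ^ 2 - ∑ i, M i ^ 2)
    (fun M _ ⟨e⟩ => neg_le_neg (harary_eq_of_iso e).ge) ?_ L ⟨hL, hn⟩).imp_right neg_lt_neg_iff.mp
  rintro M ⟨hM, hMn⟩ hiso
  obtain ⟨M', i₁, i₂, hs, hM'⟩ := exists_isSpread_of_not_broom hM fun ⟨_, h⟩ =>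
    hiso (nonempty_iso_broom_of_forall_ne_eq_one h hMn)
  have hsq : ∑ i, M' i ^ 2 ≤ (n - 1) ^ 2 := by
    rw [hMn, ← hs.sum_eq, Nat.add_sub_cancel]
    exact Finset.sum_sq_le_sq_sum_of_nonneg fun i _ => Nat.zero_le _
  refine ⟨M', ⟨hM', hs.sum_eq ▸ hMn⟩, by have := hs.sum_sq_lt; omega, ?_⟩
  simpa [harary_spider] using hs.spiderHarary_lt hM (by simpa using hk)

theorem nonempty_iso_BS_or_harary_lt_BS (hk : 2 ≤ k) (hL : ∀ i, 1 ≤ L i)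
    (hn : n = ∑ i, L i + 1) :
    Nonempty (spider L ≃g BS n k) ∨ harary (spider L) < harary (BS n k) := by
  obtain rfl | hk := hk.eq_or_lt
  · left
    refine nonempty_spider_iso_of_two_legs ?_
    simp only [balancedLegs, Fin.sum_univ_two] at hn ⊢
    simp only [Fin.isValue, Fin.val_zero, Fin.val_one]
    split_ifs <;> omega
  refine or_lt_of_exists_improvement (s := spiderLegs k n)
    (p := fun M => Nonempty (spider M ≃g BS n k)) (f := fun M => harary (spider M))
    (fun M => ∑ i, M i ^ 2) (fun M _ ⟨e⟩ => (harary_eq_of_iso e).le) ?_ L ⟨hL, hn⟩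
  rintro M ⟨hM, hMn⟩ hiso
  obtain ⟨M', i₁, i₂, hs, hM'⟩ := exists_isSpread_of_not_balanced hM fun h =>
    hiso (nonempty_iso_BS_of_balanced (by omega) h hMn)
  refine ⟨M', ⟨hM', hs.sum_eq.symm ▸ hMn⟩, hs.sum_sq_lt, ?_⟩
  simpa [harary_spider] using hs.spiderHarary_lt hM' (by simpa using hk)

end Extremal

theorem harary_spider_between_broom_and_balanced (k : ℕ) (hk : 2 ≤ k)
    (L : Fin k → ℕ) (hL : ∀ i, 1 ≤ L i) (n : ℕ) (hn : n = (∑ i, L i) + 1) :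
    (harary (broom n k) ≤ harary (spider L) ∧ harary (spider L) ≤ harary (BS n k)) ∧
    (harary (spider L) = harary (broom n k) ↔ Nonempty (spider L ≃g broom n k)) ∧
    (harary (spider L) = harary (BS n k) ↔ Nonempty (spider L ≃g BS n k)) := by
  have hbroom := nonempty_iso_broom_or_harary_broom_lt hk hL hn
  have hBS := nonempty_iso_BS_or_harary_lt_BS hk hL hn
  refine ⟨⟨?_, ?_⟩, ⟨fun h => hbroom.resolve_right (not_lt.mpr h.le), ?_⟩,
    ⟨fun h => hBS.resolve_right (not_lt.mpr h.ge), ?_⟩⟩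
  · rcases hbroom with ⟨⟨e⟩⟩ | h
    exacts [(harary_eq_of_iso e).ge, h.le]
  · rcases hBS with ⟨⟨e⟩⟩ | h
    exacts [(harary_eq_of_iso e).le, h.le]
  all_goals rintro ⟨e⟩; exact harary_eq_of_iso e
end

section
/- Let n ≥ 4 and let T be a tree on n vertices that is not isomorphic to the star S_n. Then H(T) ≤ H(C_{n,3,1}); that is, C_{n,3,1} attains the second maximum Harary index among all trees on n vertices. -/
open Finset SimpleGraph

lemma cat_adj_path (n : ℕ) (a b : Fin 4) (h : (b : ℕ) = (a : ℕ) + 1) :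
    (caterpillar n 3 1).Adj (Sum.inl a) (Sum.inl b) := by
  rw [caterpillar, SimpleGraph.fromRel_adj]
  refine ⟨?_, Or.inl (Or.inl ⟨a, b, rfl, rfl, h⟩)⟩
  intro he
  have : a = b := by exact Sum.inl.inj he
  omega

lemma cat_adj_pend (n : ℕ) (q : Fin (n - 3 - 1)) :
    (caterpillar n 3 1).Adj (Sum.inl 1) (Sum.inr q) := by
  rw [caterpillar, SimpleGraph.fromRel_adj]
  exact ⟨by simp, Or.inl (Or.inr ⟨1, q, rfl, rfl, rfl⟩)⟩

lemma inv_dist_ge {W : Type*} {G : SimpleGraph W} {u v : W} (h : u ≠ v)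
    (w : G.Walk u v) {L : ℕ} (hw : w.length ≤ L) :
    (1 : ℝ) / L ≤ 1 / ((G.dist u v : ℕ) : ℝ) := by
  have h1 : 0 < G.dist u v := Reachable.pos_dist_of_ne ⟨w⟩ h
  have h2 : G.dist u v ≤ L := le_trans (SimpleGraph.dist_le w) hw
  apply one_div_le_one_div_of_le
  · exact_mod_cast h1
  · exact_mod_cast h2

lemma inv_dist_ge' {W : Type*} {G : SimpleGraph W} {u v : W} (h : u ≠ v)
    (w : G.Walk u v) (L : ℕ) (hw : w.length ≤ L) {c : ℝ} (hc : c = 1 / L) :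
    c ≤ 1 / ((G.dist u v : ℕ) : ℝ) := by
  rw [hc]; exact inv_dist_ge h w hw

section walks
variable (n : ℕ)

abbrev CV := Fin 4 ⊕ Fin (n - 3 - 1)

def w01 : (caterpillar n 3 1).Walk (Sum.inl 0) (Sum.inl 1) :=
  Walk.cons (cat_adj_path n 0 1 (by decide)) Walk.nil
def w12 : (caterpillar n 3 1).Walk (Sum.inl 1) (Sum.inl 2) :=
  Walk.cons (cat_adj_path n 1 2 (by decide)) Walk.nil
def w23 : (caterpillar n 3 1).Walk (Sum.inl 2) (Sum.inl 3) :=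
  Walk.cons (cat_adj_path n 2 3 (by decide)) Walk.nil
def w02 : (caterpillar n 3 1).Walk (Sum.inl 0) (Sum.inl 2) := (w01 n).append (w12 n)
def w13 : (caterpillar n 3 1).Walk (Sum.inl 1) (Sum.inl 3) := (w12 n).append (w23 n)
def w03 : (caterpillar n 3 1).Walk (Sum.inl 0) (Sum.inl 3) := (w01 n).append (w13 n)
def wp (q : Fin (n - 3 - 1)) : (caterpillar n 3 1).Walk (Sum.inl 1) (Sum.inr q) :=
  Walk.cons (cat_adj_pend n q) Walk.nil
def w0q (q : Fin (n - 3 - 1)) : (caterpillar n 3 1).Walk (Sum.inl 0) (Sum.inr q) :=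
  (w01 n).append (wp n q)
def w2q (q : Fin (n - 3 - 1)) : (caterpillar n 3 1).Walk (Sum.inl 2) (Sum.inr q) :=
  (w12 n).reverse.append (wp n q)
def w3q (q : Fin (n - 3 - 1)) : (caterpillar n 3 1).Walk (Sum.inl 3) (Sum.inr q) :=
  (w13 n).reverse.append (wp n q)
def wqq (q r : Fin (n - 3 - 1)) : (caterpillar n 3 1).Walk (Sum.inr q) (Sum.inr r) :=
  (wp n q).reverse.append (wp n r)

end walks

noncomputable def ELL : Fin 4 → Fin 4 → ℝ :=
  ![![0,1,1/2,1/3],![1,0,1,1/2],![1/2,1,0,1],![1/3,1/2,1,0]]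
noncomputable def ELI : Fin 4 → ℝ := ![1/2, 1, 1/2, 1/3]

lemma hLL (n : ℕ) (a b : Fin 4) :
    ELL a b ≤ 1 / (((caterpillar n 3 1).dist ((Sum.inl a : CV n)) (Sum.inl b) : ℕ) : ℝ) := by
  fin_cases a <;> fin_cases b <;> simp only [ELL]
  · positivity
  · exact inv_dist_ge' (by simp) (w01 n) 1 (by simp [w01]) (c := 1) (hc := by norm_num)
  · exact inv_dist_ge' (by simp) (w02 n) 2 (by simp [w02, w01, w12]) (c := (1/2)) (hc := by norm_num)
  · exact inv_dist_ge' (by simp) (w03 n) 3 (by simp [w03, w01, w12, w13, w23]) (c := (1/3)) (hc := by norm_num)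
  · exact inv_dist_ge' (by simp) (w01 n).reverse 1 (by simp [w01]) (c := 1) (hc := by norm_num)
  · positivity
  · exact inv_dist_ge' (by simp) (w12 n) 1 (by simp [w12]) (c := 1) (hc := by norm_num)
  · exact inv_dist_ge' (by simp) (w13 n) 2 (by simp [w13, w12, w23]) (c := (1/2)) (hc := by norm_num)
  · exact inv_dist_ge' (by simp) (w02 n).reverse 2 (by simp [w02, w01, w12]) (c := (1/2)) (hc := by norm_num)
  · exact inv_dist_ge' (by simp) (w12 n).reverse 1 (by simp [w12]) (c := 1) (hc := by norm_num)
  · positivity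
  · exact inv_dist_ge' (by simp) (w23 n) 1 (by simp [w23]) (c := 1) (hc := by norm_num)
  · exact inv_dist_ge' (by simp) (w03 n).reverse 3 (by simp [w03, w01, w12, w13, w23]) (c := (1/3)) (hc := by norm_num)
  · exact inv_dist_ge' (by simp) (w13 n).reverse 2 (by simp [w13, w12, w23]) (c := (1/2)) (hc := by norm_num)
  · exact inv_dist_ge' (by simp) (w23 n).reverse 1 (by simp [w23]) (c := 1) (hc := by norm_num)
  · positivity

lemma hLI (n : ℕ) (a : Fin 4) (q : Fin (n - 3 - 1)) :
    ELI a ≤ 1 / (((caterpillar n 3 1).dist ((Sum.inl a : CV n)) (Sum.inr q) : ℕ) : ℝ) := by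
  fin_cases a <;> simp only [ELI]
  · exact inv_dist_ge' (by simp) ((w01 n).append (wp n q)) 2 (by simp [w01, wp])
      (c := (1/2)) (hc := by norm_num)
  · exact inv_dist_ge' (by simp) (wp n q) 1 (by simp [wp]) (c := 1) (hc := by norm_num)
  · exact inv_dist_ge' (by simp) ((w12 n).reverse.append (wp n q)) 2 (by simp [w12, wp])
      (c := (1/2)) (hc := by norm_num)
  · exact inv_dist_ge' (by simp) ((w13 n).reverse.append (wp n q)) 3
      (by simp [w13, w12, w23, wp]) (c := (1/3)) (hc := by norm_num)

lemma hIL (n : ℕ) (a : Fin 4) (q : Fin (n - 3 - 1)) :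
    ELI a ≤ 1 / (((caterpillar n 3 1).dist (Sum.inr q) ((Sum.inl a : CV n)) : ℕ) : ℝ) := by
  rw [SimpleGraph.dist_comm]; exact hLI n a q

lemma hII (n : ℕ) (q r : Fin (n - 3 - 1)) :
    (if q = r then (0:ℝ) else 1/2) ≤
      1 / (((caterpillar n 3 1).dist ((Sum.inr q : CV n)) (Sum.inr r) : ℕ) : ℝ) := by
  by_cases h : q = r
  · rw [if_pos h]; positivity
  · rw [if_neg h]
    exact inv_dist_ge' (by simp [h]) (wqq n q r) 2 (by simp [wqq, wp])
      (c := (1/2)) (hc := by norm_num)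

lemma cat_lb (n : ℕ) (hn : 4 ≤ n) :
    (3*(n:ℝ)^2 + n)/6 ≤
      ∑ u : CV n, ∑ v : CV n, 1 / (((caterpillar n 3 1).dist u v : ℕ) : ℝ) := by
  have hp : ((n - 3 - 1 : ℕ) : ℝ) = (n : ℝ) - 4 := by
    have : (n - 3 - 1 : ℕ) = n - 4 := by omega
    rw [this]; push_cast [Nat.cast_sub (by omega : 4 ≤ n)]; ring
  set p : ℕ := n - 3 - 1 with hpdef
  rw [Fintype.sum_sum_type]
  have e1 : ∀ a : Fin 4, (∑ v : CV n, 1 / (((caterpillar n 3 1).dist (Sum.inl a) v : ℕ) : ℝ))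
      = (∑ b : Fin 4, 1 / (((caterpillar n 3 1).dist (Sum.inl a) (Sum.inl b) : ℕ) : ℝ))
      + ∑ q : Fin p, 1 / (((caterpillar n 3 1).dist (Sum.inl a) (Sum.inr q) : ℕ) : ℝ) := by
    intro a; rw [Fintype.sum_sum_type]
  have e2 : ∀ q : Fin p, (∑ v : CV n, 1 / (((caterpillar n 3 1).dist (Sum.inr q) v : ℕ) : ℝ))
      = (∑ b : Fin 4, 1 / (((caterpillar n 3 1).dist (Sum.inr q) (Sum.inl b) : ℕ) : ℝ))
      + ∑ r : Fin p, 1 / (((caterpillar n 3 1).dist (Sum.inr q) (Sum.inr r) : ℕ) : ℝ) := by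
    intro q; rw [Fintype.sum_sum_type]
  simp only [e1, e2]
  rw [Finset.sum_add_distrib, Finset.sum_add_distrib]
  have B1 : (26/3 : ℝ) ≤ ∑ a : Fin 4, ∑ b : Fin 4,
      1 / (((caterpillar n 3 1).dist ((Sum.inl a : CV n)) (Sum.inl b) : ℕ) : ℝ) := by
    have : (26/3 : ℝ) = ∑ a : Fin 4, ∑ b : Fin 4, ELL a b := by
      simp [Fin.sum_univ_four, ELL]; norm_num
    rw [this]
    exact Finset.sum_le_sum fun a _ => Finset.sum_le_sum fun b _ => hLL n a b
  have B2 : (p : ℝ) * (7/3) ≤ ∑ a : Fin 4, ∑ q : Fin p,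
      1 / (((caterpillar n 3 1).dist ((Sum.inl a : CV n)) (Sum.inr q) : ℕ) : ℝ) := by
    have : (p : ℝ) * (7/3) = ∑ a : Fin 4, ∑ _q : Fin p, ELI a := by
      simp [Fin.sum_univ_four, ELI]; ring
    rw [this]
    exact Finset.sum_le_sum fun a _ => Finset.sum_le_sum fun q _ => hLI n a q
  have B3 : (p : ℝ) * (7/3) ≤ ∑ q : Fin p, ∑ a : Fin 4,
      1 / (((caterpillar n 3 1).dist ((Sum.inr q : CV n)) (Sum.inl a) : ℕ) : ℝ) := by
    have : (p : ℝ) * (7/3) = ∑ _q : Fin p, ∑ a : Fin 4, ELI a := by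
      simp [Fin.sum_univ_four, ELI]; ring
    rw [this]
    exact Finset.sum_le_sum fun q _ => Finset.sum_le_sum fun a _ => hIL n a q
  have B4 : (p : ℝ) * ((p : ℝ) - 1) / 2 ≤ ∑ q : Fin p, ∑ r : Fin p,
      1 / (((caterpillar n 3 1).dist ((Sum.inr q : CV n)) (Sum.inr r) : ℕ) : ℝ) := by
    have : (p : ℝ) * ((p : ℝ) - 1) / 2
        = ∑ q : Fin p, ∑ r : Fin p, (if q = r then (0:ℝ) else 1/2) := by
      have : ∀ q : Fin p, ∑ r : Fin p, (if q = r then (0:ℝ) else 1/2)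
          = ((p : ℝ) - 1) / 2 := by
        intro q
        have : ∀ r : Fin p, (if q = r then (0:ℝ) else 1/2)
            = 1/2 - (if q = r then (1/2 : ℝ) else 0) := by
          intro r; by_cases h : q = r <;> simp [h]
        simp only [this]
        rw [Finset.sum_sub_distrib, Finset.sum_ite_eq]
        simp [Finset.card_univ]
        ring
      simp only [this, Finset.sum_const, Finset.card_univ, Fintype.card_fin, nsmul_eq_mul]
      ring
    rw [this]
    exact Finset.sum_le_sum fun q _ => Finset.sum_le_sum fun r _ => hII n q r
  refine le_trans (le_of_eq ?_) (add_le_add (add_le_add B1 B2) (add_le_add B3 B4))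
  rw [hp]
  ring


section TreeSide

variable {V : Type*} [Fintype V] [DecidableEq V] (T : SimpleGraph V) [DecidableRel T.Adj]

lemma star_iso (hn : 1 ≤ n) (hcard : Fintype.card V = n) (v : V)
    (hv : ∀ u, u ≠ v → T.Adj v u) (honly : ∀ a b, T.Adj a b → a = v ∨ b = v) :
    Nonempty (T ≃g starG n) := by
  have : NeZero n := ⟨by omega⟩
  let e0 := Fintype.equivFinOfCardEq hcard
  let e : V ≃ Fin n := e0.trans (Equiv.swap (e0 v) 0)
  have hev : e v = 0 := by simp [e, Equiv.swap_apply_left]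
  have hiff : ∀ a, e a = 0 ↔ a = v := by
    intro a
    rw [← hev]
    exact ⟨fun h => e.injective h, fun h => by rw [h]⟩
  refine ⟨⟨e, ?_⟩⟩
  intro a b
  rw [starG, SimpleGraph.fromRel_adj]
  have hval : ∀ a, (e a : ℕ) = 0 ↔ a = v := by
    intro a
    constructor
    · intro h; exact (hiff a).mp (Fin.ext (by simp [h]))
    · intro h; rw [(hiff a).mpr h]; simp
  constructor
  · rintro ⟨hne, h | h⟩
    · have ha : a = v := (hval a).mp h.1
      have hb : b ≠ v := fun hb => h.2 ((hval b).mpr hb)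
      rw [ha]; exact hv b hb
    · have hb : b = v := (hval b).mp h.1
      have ha : a ≠ v := fun ha => h.2 ((hval a).mpr ha)
      rw [hb]; exact (hv a ha).symm
  · intro hadj
    refine ⟨fun h => hadj.ne (e.injective h), ?_⟩
    rcases honly a b hadj with h | h
    · left
      refine ⟨(hval a).mpr h, fun hb => ?_⟩
      have : b = v := (hval b).mp hb
      exact hadj.ne (h.trans this.symm)
    · right
      refine ⟨(hval b).mpr h, fun ha => ?_⟩
      have : a = v := (hval a).mp ha
      exact hadj.ne (this.trans h.symm)

lemma deg_le (hT : T.IsTree) (n : ℕ) (hn : 4 ≤ n) (hcard : Fintype.card V = n)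
    (hTS : ¬ Nonempty (T ≃g starG n)) (v : V) : T.degree v ≤ n - 2 := by
  have hlt : T.degree v < n := hcard ▸ T.degree_lt_card_verts v
  by_contra hge
  have hd : T.degree v = n - 1 := by omega
  have hsub : T.neighborFinset v ⊆ Finset.univ.erase v := by
    intro u hu
    exact Finset.mem_erase.mpr ⟨((T.mem_neighborFinset v u).mp hu).ne', Finset.mem_univ u⟩
  have heq : T.neighborFinset v = Finset.univ.erase v := by
    apply Finset.eq_of_subset_of_card_le hsub
    rw [Finset.card_erase_of_mem (Finset.mem_univ v), Finset.card_univ, hcard]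
    rw [SimpleGraph.degree] at hd
    omega
  have hv : ∀ u, u ≠ v → T.Adj v u := by
    intro u hu
    have : u ∈ T.neighborFinset v := by
      rw [heq]; exact Finset.mem_erase.mpr ⟨hu, Finset.mem_univ u⟩
    exact (T.mem_neighborFinset v u).mp this
  have honly : ∀ a b, T.Adj a b → a = v ∨ b = v := by
    intro a b hab
    by_contra hcon
    push_neg at hcon
    obtain ⟨ha, hb⟩ := hcon
    have hp1 : (SimpleGraph.Walk.cons hab SimpleGraph.Walk.nil).IsPath := by
      simp [SimpleGraph.Walk.isPath_def, hab.ne]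
    have hp2 : (SimpleGraph.Walk.cons (hv a ha).symm
        (SimpleGraph.Walk.cons (hv b hb) SimpleGraph.Walk.nil)).IsPath := by
      simp [SimpleGraph.Walk.isPath_def, List.nodup_cons]
      exact ⟨⟨ha, hab.ne⟩, fun h => hb h.symm⟩
    obtain ⟨p, _, hu⟩ := hT.existsUnique_path a b
    have e1 := hu _ hp1
    have e2 := hu _ hp2
    have heq2 := e1.trans e2.symm
    have : (SimpleGraph.Walk.cons hab SimpleGraph.Walk.nil).length
        = (SimpleGraph.Walk.cons (hv a ha).symm
          (SimpleGraph.Walk.cons (hv b hb) SimpleGraph.Walk.nil)).length := by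
      rw [heq2]
    simp at this
  exact hTS (star_iso T (by omega) hcard v hv honly)

lemma deg_ge1 (hconn : T.Connected) (h2 : 2 ≤ Fintype.card V) (v : V) :
    1 ≤ T.degree v := by
  obtain ⟨u, hu⟩ := Fintype.exists_ne_of_one_lt_card (by omega) v
  obtain ⟨w⟩ := hconn.preconnected v u
  cases w with
  | nil => exact absurd rfl hu.symm
  | cons h p => exact (T.degree_pos_iff_exists_adj v).mpr ⟨_, h⟩

end TreeSide

section TreeSide2

variable {V : Type*} [Fintype V] [DecidableEq V] (T : SimpleGraph V) [DecidableRel T.Adj]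

lemma handshake (hT : T.IsTree) (n : ℕ) (hn : 4 ≤ n) (hcard : Fintype.card V = n) :
    ∑ v : V, T.degree v = 2 * (n - 1) := by
  have h := hT.card_edgeFinset
  rw [hcard] at h
  rw [SimpleGraph.sum_degrees_eq_twice_card_edges]
  omega

lemma two_le_t (hT : T.IsTree) (n : ℕ) (hn : 4 ≤ n) (hcard : Fintype.card V = n)
    (hTS : ¬ Nonempty (T ≃g starG n)) :
    2 ≤ (Finset.univ.filter fun v : V => 2 ≤ T.degree v).card := by
  by_contra hcon
  push_neg at hcon
  have hsplit := Finset.sum_filter_add_sum_filter_not Finset.univ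
    (fun v : V => 2 ≤ T.degree v) (fun v => T.degree v)
  have hcards := Finset.card_filter_add_card_filter_not
    (s := (Finset.univ : Finset V)) (p := fun v : V => 2 ≤ T.degree v)
  rw [Finset.card_univ, hcard] at hcards
  have h2 : ∑ v ∈ Finset.univ.filter (fun v : V => ¬ 2 ≤ T.degree v), T.degree v
      ≤ (Finset.univ.filter (fun v : V => ¬ 2 ≤ T.degree v)).card * 1 := by
    apply Finset.sum_le_card_nsmul
    intro x hx
    have := (Finset.mem_filter.mp hx).2
    omega
  have hhs := handshake T hT n hn hcard
  rw [← hsplit] at hhs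
  have h0 : (Finset.univ.filter fun v : V => 2 ≤ T.degree v).card = 0 ∨
      (Finset.univ.filter fun v : V => 2 ≤ T.degree v).card = 1 := by omega
  rcases h0 with h0 | h0
  · rw [Finset.card_eq_zero.mp h0, Finset.sum_empty] at hhs
    omega
  · have h1 : ∑ v ∈ Finset.univ.filter (fun v : V => 2 ≤ T.degree v), T.degree v
        ≤ (Finset.univ.filter (fun v : V => 2 ≤ T.degree v)).card * (n - 2) := by
      apply Finset.sum_le_card_nsmul
      intro x _
      exact deg_le T hT n hn hcard hTS x
    rw [h0] at h1
    omega

lemma degsum_bound (hT : T.IsTree) (n : ℕ) (hn : 4 ≤ n) (hcard : Fintype.card V = n)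
    (hTS : ¬ Nonempty (T ≃g starG n)) :
    ∑ v : V, (T.degree v : ℝ) * ((T.degree v : ℝ) - 1) ≤ (n : ℝ)^2 - 5*n + 8 := by
  have ht2 : 2 ≤ (Finset.univ.filter fun v : V => 2 ≤ T.degree v).card :=
    two_le_t T hT n hn hcard hTS
  have hd1 : ∀ v : V, 1 ≤ T.degree v := deg_ge1 T hT.isConnected (by omega)
  have hdmax : ∀ v : V, T.degree v ≤ n - 2 := deg_le T hT n hn hcard hTS
  have hcards := Finset.card_filter_add_card_filter_not
    (s := (Finset.univ : Finset V)) (p := fun v : V => 2 ≤ T.degree v)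
  rw [Finset.card_univ, hcard] at hcards
  have hone : ∀ v ∈ Finset.univ.filter (fun v : V => ¬ 2 ≤ T.degree v),
      T.degree v = 1 := by
    intro x hx
    have h := (Finset.mem_filter.mp hx).2
    have := hd1 x
    omega
  have hzero : ∑ v ∈ Finset.univ.filter (fun v : V => ¬ 2 ≤ T.degree v),
      (T.degree v : ℝ) * ((T.degree v : ℝ) - 1) = 0 := by
    apply Finset.sum_eq_zero
    intro x hx
    rw [hone x hx]; norm_num
  have hs1 : ∑ v ∈ Finset.univ.filter (fun v : V => ¬ 2 ≤ T.degree v),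
      (T.degree v : ℝ) = (n : ℝ) - (Finset.univ.filter fun v : V => 2 ≤ T.degree v).card := by
    rw [Finset.sum_congr rfl (fun x hx => by rw [hone x hx, Nat.cast_one]),
      Finset.sum_const, nsmul_eq_mul, mul_one]
    have hc2 : (Finset.univ.filter (fun v : V => ¬ 2 ≤ T.degree v)).card
        = n - (Finset.univ.filter fun v : V => 2 ≤ T.degree v).card := by omega
    rw [hc2, Nat.cast_sub (by omega)]
  have hall : ∑ v : V, (T.degree v : ℝ) = 2*(n:ℝ) - 2 := by
    have h := handshake T hT n hn hcard
    have h2 : ((∑ v : V, T.degree v : ℕ) : ℝ) = ((2 * (n-1) : ℕ) : ℝ) := by rw [h]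
    push_cast [Nat.cast_sub (by omega : 1 ≤ n)] at h2
    rw [h2]; ring
  have hsplitd := Finset.sum_filter_add_sum_filter_not Finset.univ
    (fun v : V => 2 ≤ T.degree v) (fun v => (T.degree v : ℝ))
  have hSdeg : ∑ v ∈ Finset.univ.filter (fun v : V => 2 ≤ T.degree v), (T.degree v : ℝ)
      = (n:ℝ) - 2 + (Finset.univ.filter fun v : V => 2 ≤ T.degree v).card := by
    rw [hall] at hsplitd
    rw [hs1] at hsplitd
    linarith
  have hptN : ∀ v ∈ Finset.univ.filter (fun v : V => 2 ≤ T.degree v),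
      (T.degree v : ℝ) * ((T.degree v : ℝ) - 1)
      ≤ ((n:ℝ) - 1) * (T.degree v : ℝ) - 2*((n:ℝ) - 2) := by
    intro x hx
    have h2 := (Finset.mem_filter.mp hx).2
    have hx2 : (2:ℝ) ≤ (T.degree x : ℝ) := by exact_mod_cast h2
    have hxmax : (T.degree x : ℝ) ≤ (n:ℝ) - 2 := by
      have h3 : ((T.degree x : ℕ) : ℝ) ≤ ((n - 2 : ℕ) : ℝ) := by exact_mod_cast hdmax x
      rw [Nat.cast_sub (by omega : 2 ≤ n)] at h3
      push_cast at h3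
      linarith
    nlinarith [mul_nonneg (by linarith : (0:ℝ) ≤ (T.degree x : ℝ) - 2)
      (by linarith : (0:ℝ) ≤ (n:ℝ) - 2 - (T.degree x : ℝ))]
  have hsplit := Finset.sum_filter_add_sum_filter_not Finset.univ
    (fun v : V => 2 ≤ T.degree v) (fun v => (T.degree v : ℝ) * ((T.degree v : ℝ) - 1))
  calc ∑ v : V, (T.degree v : ℝ) * ((T.degree v : ℝ) - 1)
      = ∑ v ∈ Finset.univ.filter (fun v : V => 2 ≤ T.degree v),
          (T.degree v : ℝ) * ((T.degree v : ℝ) - 1) := by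
        rw [← hsplit, hzero, add_zero]
    _ ≤ ∑ v ∈ Finset.univ.filter (fun v : V => 2 ≤ T.degree v),
          (((n:ℝ) - 1) * (T.degree v : ℝ) - 2*((n:ℝ) - 2)) :=
        Finset.sum_le_sum hptN
    _ = ((n:ℝ) - 1) * (∑ v ∈ Finset.univ.filter (fun v : V => 2 ≤ T.degree v),
          (T.degree v : ℝ)) - 2*((n:ℝ)-2)*(Finset.univ.filter
            fun v : V => 2 ≤ T.degree v).card := by
        rw [Finset.sum_sub_distrib, ← Finset.mul_sum, Finset.sum_const, nsmul_eq_mul]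
        ring
    _ ≤ (n : ℝ)^2 - 5*n + 8 := by
        rw [hSdeg]
        have htn : (2:ℝ) ≤ ((Finset.univ.filter
            fun v : V => 2 ≤ T.degree v).card : ℝ) := by exact_mod_cast ht2
        have hnn : (4:ℝ) ≤ (n : ℝ) := by exact_mod_cast hn
        nlinarith [mul_nonneg (by linarith : (0:ℝ) ≤ ((Finset.univ.filter
            fun v : V => 2 ≤ T.degree v).card : ℝ) - 2)
          (by linarith : (0:ℝ) ≤ (n:ℝ) - 3)]

end TreeSide2

section TreeSide3

variable {V : Type*} [Fintype V] [DecidableEq V] (T : SimpleGraph V) [DecidableRel T.Adj]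

lemma dist2_card :
    (((Finset.univ ×ˢ Finset.univ).filter
        fun z : V × V => T.dist z.1 z.2 = 2).card : ℝ)
      ≤ ∑ v : V, (T.degree v : ℝ) * ((T.degree v : ℝ) - 1) := by
  classical
  set P2 := (Finset.univ ×ˢ Finset.univ).filter
    (fun z : V × V => T.dist z.1 z.2 = 2) with hP2
  have hmidp : ∀ z : V × V, T.dist z.1 z.2 = 2 →
      ∃ m : V, T.Adj z.1 m ∧ T.Adj m z.2 := by
    intro z hz
    obtain ⟨w, hw⟩ := SimpleGraph.exists_walk_of_dist_ne_zero (by rw [hz]; omega)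
    rw [hz] at hw
    refine ⟨w.getVert 1, ?_, ?_⟩
    · have := w.adj_getVert_succ (i := 0) (by omega)
      rwa [w.getVert_zero] at this
    · have := w.adj_getVert_succ (i := 1) (by omega)
      have h2 : w.getVert 2 = z.2 := by
        have := w.getVert_length
        rwa [hw] at this
      rwa [h2] at this
  choose mid hmid1 hmid2 using fun z (h : T.dist z.1 z.2 = 2) => hmidp z h
  let f : V × V → V := fun z => if h : T.dist z.1 z.2 = 2 then mid z h else z.1
  have hfiber : P2.card = ∑ m : V, (P2.filter fun z => f z = m).card :=
    Finset.card_eq_sum_card_fiberwise (fun z _ => Finset.mem_univ (f z))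
  have hsub : ∀ m : V, (P2.filter fun z => f z = m) ⊆ (T.neighborFinset m).offDiag := by
    intro m z hz
    obtain ⟨hzP, hzf⟩ := Finset.mem_filter.mp hz
    have hd : T.dist z.1 z.2 = 2 := (Finset.mem_filter.mp hzP).2
    have hf : f z = mid z hd := dif_pos hd
    rw [hf] at hzf
    subst hzf
    refine Finset.mem_offDiag.mpr ⟨?_, ?_, ?_⟩
    · exact (T.mem_neighborFinset _ _).mpr (hmid1 z hd).symm
    · exact (T.mem_neighborFinset _ _).mpr (hmid2 z hd)
    · intro h
      rw [h] at hd
      rw [SimpleGraph.dist_self] at hd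
      omega
  have hcount : P2.card ≤ ∑ m : V, (T.degree m * T.degree m - T.degree m) := by
    rw [hfiber]
    apply Finset.sum_le_sum
    intro m _
    calc (P2.filter fun z => f z = m).card
        ≤ (T.neighborFinset m).offDiag.card := Finset.card_le_card (hsub m)
      _ = T.degree m * T.degree m - T.degree m := by
          rw [Finset.offDiag_card]; rfl
  calc ((P2.card : ℕ) : ℝ) ≤ ((∑ m : V, (T.degree m * T.degree m - T.degree m) : ℕ) : ℝ) := by
        exact_mod_cast hcount
    _ = ∑ v : V, (T.degree v : ℝ) * ((T.degree v : ℝ) - 1) := by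
        rw [Nat.cast_sum]
        apply Finset.sum_congr rfl
        intro x _
        have hle : T.degree x ≤ T.degree x * T.degree x := by
          rcases Nat.eq_zero_or_pos (T.degree x) with h | h
          · rw [h]
          · exact Nat.le_mul_of_pos_left _ h
        rw [Nat.cast_sub hle]
        push_cast
        ring

lemma adj_sum (hT : T.IsTree) (n : ℕ) (hn : 4 ≤ n) (hcard : Fintype.card V = n) :
    ∑ u : V, ∑ v : V, (if T.Adj u v then (1:ℝ) else 0) = 2*(n:ℝ) - 2 := by
  have hinner : ∀ u : V, ∑ v : V, (if T.Adj u v then (1:ℝ) else 0) = T.degree u := by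
    intro u
    rw [Finset.sum_boole]
    congr 1
    simp [SimpleGraph.degree, SimpleGraph.neighborFinset_eq_filter]
  simp only [hinner]
  have h := handshake T hT n hn hcard
  have h2 : ((∑ v : V, T.degree v : ℕ) : ℝ) = ((2 * (n-1) : ℕ) : ℝ) := by rw [h]
  push_cast [Nat.cast_sub (by omega : 1 ≤ n)] at h2
  rw [h2]; ring

lemma pt_bound (hconn : T.Connected) (u v : V) :
    1 / ((T.dist u v : ℕ) : ℝ) ≤ (if u = v then 0 else 1/3)
      + (1/6) * (if T.dist u v = 2 then 1 else 0)
      + (2/3) * (if T.Adj u v then 1 else 0) := by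
  by_cases huv : u = v
  · subst huv
    simp [SimpleGraph.dist_self]
  · rw [if_neg huv]
    have hd1 : 1 ≤ T.dist u v := hconn.pos_dist_of_ne huv
    by_cases hadj : T.Adj u v
    · have : T.dist u v = 1 := SimpleGraph.dist_eq_one_iff_adj.mpr hadj
      rw [this, if_pos hadj, if_neg (by omega : ¬ (1:ℕ) = 2)]
      norm_num
    · rw [if_neg hadj]
      by_cases hd2 : T.dist u v = 2
      · rw [hd2, if_pos rfl]
        norm_num
      · rw [if_neg hd2]
        have hne1 : T.dist u v ≠ 1 := fun h =>
          hadj (SimpleGraph.dist_eq_one_iff_adj.mp h)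
        have h3 : 3 ≤ T.dist u v := by omega
        have : 1 / ((T.dist u v : ℕ) : ℝ) ≤ 1/3 := by
          apply one_div_le_one_div_of_le
          · norm_num
          · exact_mod_cast h3
        linarith

lemma tree_ub (hT : T.IsTree) (n : ℕ) (hn : 4 ≤ n) (hcard : Fintype.card V = n)
    (hTS : ¬ Nonempty (T ≃g starG n)) :
    ∑ u : V, ∑ v : V, 1 / ((T.dist u v : ℕ) : ℝ) ≤ (3*(n:ℝ)^2 + n)/6 := by
  have step1 : ∑ u : V, ∑ v : V, 1 / ((T.dist u v : ℕ) : ℝ)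
      ≤ ∑ u : V, ∑ v : V, ((if u = v then (0:ℝ) else 1/3)
        + (1/6) * (if T.dist u v = 2 then 1 else 0)
        + (2/3) * (if T.Adj u v then 1 else 0)) :=
    Finset.sum_le_sum fun u _ => Finset.sum_le_sum fun v _ =>
      pt_bound T hT.isConnected u v
  have S1 : ∑ u : V, ∑ v : V, (if u = v then (0:ℝ) else 1/3)
      = ((n:ℝ)^2 - n)/3 := by
    have hinner : ∀ u : V, ∑ v : V, (if u = v then (0:ℝ) else 1/3)
        = (n:ℝ)/3 - 1/3 := by
      intro u
      have : ∀ v : V, (if u = v then (0:ℝ) else 1/3)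
          = 1/3 - (if u = v then (1/3:ℝ) else 0) := by
        intro v; by_cases h : u = v <;> simp [h]
      simp only [this]
      rw [Finset.sum_sub_distrib, Finset.sum_const, Finset.card_univ, hcard,
        Finset.sum_ite_eq, if_pos (Finset.mem_univ u), nsmul_eq_mul]
      ring
    simp only [hinner]
    rw [Finset.sum_const, Finset.card_univ, hcard, nsmul_eq_mul]
    ring
  have S2 : ∑ u : V, ∑ v : V, ((1:ℝ)/6) * (if T.dist u v = 2 then 1 else 0)
      ≤ (1/6) * ((n:ℝ)^2 - 5*n + 8) := by
    have : ∑ u : V, ∑ v : V, ((1:ℝ)/6) * (if T.dist u v = 2 then 1 else 0)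
        = (1/6) * (((Finset.univ ×ˢ Finset.univ).filter
            fun z : V × V => T.dist z.1 z.2 = 2).card : ℝ) := by
      simp only [← Finset.mul_sum]
      congr 1
      rw [← Finset.sum_product']
      rw [Finset.sum_boole]
    rw [this]
    have h1 := dist2_card T
    have h2 := degsum_bound T hT n hn hcard hTS
    linarith
  have S3 : ∑ u : V, ∑ v : V, ((2:ℝ)/3) * (if T.Adj u v then 1 else 0)
      = (2/3) * (2*(n:ℝ) - 2) := by
    simp only [← Finset.mul_sum]
    congr 1
    exact adj_sum T hT n hn hcard
  have hsum : ∑ u : V, ∑ v : V, ((if u = v then (0:ℝ) else 1/3)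
      + (1/6) * (if T.dist u v = 2 then 1 else 0)
      + (2/3) * (if T.Adj u v then 1 else 0))
      = (∑ u : V, ∑ v : V, (if u = v then (0:ℝ) else 1/3))
      + (∑ u : V, ∑ v : V, ((1:ℝ)/6) * (if T.dist u v = 2 then 1 else 0))
      + (∑ u : V, ∑ v : V, ((2:ℝ)/3) * (if T.Adj u v then 1 else 0)) := by
    rw [← Finset.sum_add_distrib, ← Finset.sum_add_distrib]
    apply Finset.sum_congr rfl
    intro u _
    rw [← Finset.sum_add_distrib, ← Finset.sum_add_distrib]
  rw [hsum, S1, S3] at step1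
  have hnn : (4:ℝ) ≤ (n:ℝ) := by exact_mod_cast hn
  calc ∑ u : V, ∑ v : V, 1 / ((T.dist u v : ℕ) : ℝ)
      ≤ ((n:ℝ)^2 - n)/3 + (∑ u : V, ∑ v : V, ((1:ℝ)/6)
          * (if T.dist u v = 2 then 1 else 0)) + (2/3) * (2*(n:ℝ) - 2) := step1
    _ ≤ ((n:ℝ)^2 - n)/3 + (1/6) * ((n:ℝ)^2 - 5*n + 8) + (2/3) * (2*(n:ℝ) - 2) := by
        linarith [S2]
    _ = (3*(n:ℝ)^2 + n)/6 := by ring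

end TreeSide3

lemma harary_eq {W : Type*} [Fintype W] (G : SimpleGraph W) :
    harary G = (∑ u : W, ∑ v : W, 1 / ((G.dist u v : ℕ) : ℝ)) / 2 := by
  unfold harary
  congr 1
  apply Finset.sum_congr rfl
  intro u _
  apply Finset.sum_congr rfl
  intro v _
  by_cases h : u = v
  · rw [if_pos h, h, SimpleGraph.dist_self]
    simp
  · rw [if_neg h]

theorem harary_second_max {V : Type*} [Fintype V] (T : SimpleGraph V) (hT : T.IsTree)
    (n : ℕ) (hn : 4 ≤ n) (hcard : Fintype.card V = n)
    (hTS : ¬ Nonempty (T ≃g starG n)) :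
    harary T ≤ harary (caterpillar n 3 1) := by
  classical
  rw [harary_eq, harary_eq]
  have h1 := tree_ub T hT n hn hcard hTS
  have h2 := cat_lb n hn
  have h3 : (∑ u : V, ∑ v : V, 1 / ((T.dist u v : ℕ) : ℝ))
      ≤ ∑ u : CV n, ∑ v : CV n, 1 / (((caterpillar n 3 1).dist u v : ℕ) : ℝ) :=
    le_trans h1 h2
  have h4 : (∑ u : CV n, ∑ v : CV n, 1 / (((caterpillar n 3 1).dist u v : ℕ) : ℝ))
      = ∑ u : Fin (3+1) ⊕ Fin (n - 3 - 1), ∑ v : Fin (3+1) ⊕ Fin (n - 3 - 1),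
        1 / (((caterpillar n 3 1).dist u v : ℕ) : ℝ) := rfl
  rw [h4] at h3
  linarith
end
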